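/- Let K = W(k)[1/p] for k algebraically closed of characteristic p, and let V = K^r with the semilinear operator F(x_1,…,x_r) = (φ(x_2),…,φ(x_r), p^s φ(x_1)) where gcd(r,s)=1, r>0. If there exists a nonzero x ∈ V with F(x) = p^i x for some integer i, then r = 1 and s = i. -/

import Mathlib

/-!
Since `φ` is injective and `p ^ i ≠ 0`, the relations `φ (x (k + 1)) = p ^ i * x k` force all
coordinates of `x` to vanish as soon as one does, so every coordinate is nonzero. The valuation
then increases by `i` along the chain, and closing the cycle through `p ^ s * φ (x 0)` gives
`s = r * i`; as `r` and `s` are coprime, `r` is a unit, i.e. `r = 1`.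
-/

section AdditiveValuation

variable {K : Type*} [Field K] (v : K → ℤ)

theorem val_one_of_val_mul (hv_mul : ∀ x y : K, x ≠ 0 → y ≠ 0 → v (x * y) = v x + v y) :
    v 1 = 0 := by
  have h := hv_mul 1 1 one_ne_zero one_ne_zero
  rw [one_mul] at h
  omega

theorem val_zpow_of_val_mul (hv_mul : ∀ x y : K, x ≠ 0 → y ≠ 0 → v (x * y) = v x + v y)
    {a : K} (ha : a ≠ 0) (m : ℤ) : v (a ^ m) = m * v a := by
  induction m using Int.induction_on with
  | zero => simp [val_one_of_val_mul v hv_mul]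
  | succ m ih =>
    rw [zpow_add_one₀ ha, hv_mul _ _ (zpow_ne_zero _ ha) ha, ih]
    ring
  | pred m ih =>
    have h := hv_mul _ _ (zpow_ne_zero (-(m : ℤ) - 1) ha) ha
    rw [← zpow_add_one₀ ha, sub_add_cancel, ih] at h
    linarith

end AdditiveValuation

section FrobeniusChain

variable {K : Type*} [Field K] (φ : K ≃+* K) {r : ℕ} (x : Fin r → K) {c : K}

theorem chain_eq_zero_iff (hc : c ≠ 0)
    (hchain : ∀ (k : ℕ) (hk : k + 1 < r), φ (x ⟨k + 1, hk⟩) = c * x ⟨k, k.lt_of_succ_lt hk⟩)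
    (hr : 0 < r) (k : ℕ) (hk : k < r) : x ⟨k, hk⟩ = 0 ↔ x ⟨0, hr⟩ = 0 := by
  induction k with
  | zero => rfl
  | succ k ih =>
    rw [← ih (k.lt_of_succ_lt hk), ← map_eq_zero_iff φ φ.injective, hchain k hk, mul_eq_zero,
      or_iff_right hc]

theorem val_chain (v : K → ℤ) (hv_mul : ∀ x y : K, x ≠ 0 → y ≠ 0 → v (x * y) = v x + v y)
    (hv_phi : ∀ x : K, x ≠ 0 → v (φ x) = v x) (hc : c ≠ 0)
    (hchain : ∀ (k : ℕ) (hk : k + 1 < r), φ (x ⟨k + 1, hk⟩) = c * x ⟨k, k.lt_of_succ_lt hk⟩)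
    (hnz : ∀ j, x j ≠ 0) (hr : 0 < r) (k : ℕ) (hk : k < r) :
    v (x ⟨k, hk⟩) = v (x ⟨0, hr⟩) + k * v c := by
  induction k with
  | zero => simp
  | succ k ih =>
    have h := congrArg v (hchain k hk)
    rw [hv_phi _ (hnz _), hv_mul _ _ hc (hnz _), ih (k.lt_of_succ_lt hk)] at h
    rw [h]
    push_cast
    ring

end FrobeniusChain

theorem eq_one_of_isCoprime_mul {r : ℕ} {i : ℤ} (hcop : IsCoprime (r : ℤ) (r * i)) : r = 1 := by
  have h := Int.isUnit_iff_natAbs_eq.mp (hcop.isUnit_of_dvd' dvd_rfl (dvd_mul_right _ _))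
  rwa [Int.natAbs_natCast] at h

theorem stmt_2_general (p : ℕ) (K : Type*) [Field K]
    (φ : K ≃+* K) (v : K → ℤ)
    (hp0 : (p : K) ≠ 0)
    (hv_mul : ∀ x y : K, x ≠ 0 → y ≠ 0 → v (x * y) = v x + v y)
    (hv_p : v ((p : K)) = 1)
    (hv_phi : ∀ x : K, x ≠ 0 → v (φ x) = v x)
    (r : ℕ) (s i : ℤ) (hr : 0 < r) (hcop : IsCoprime (r : ℤ) s)
    (x : Fin r → K) (hx : x ≠ 0)
    (hFx : ∀ j : Fin r,
      (if h : (j : ℕ) + 1 < r then φ (x ⟨(j : ℕ) + 1, h⟩)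
        else (p : K) ^ s * φ (x ⟨0, hr⟩)) = (p : K) ^ i * x j) :
    r = 1 ∧ s = i := by
  have hv_zpow (m : ℤ) : v ((p : K) ^ m) = m := by
    rw [val_zpow_of_val_mul v hv_mul hp0, hv_p, mul_one]
  have hpi : (p : K) ^ i ≠ 0 := zpow_ne_zero _ hp0
  have hchain (k : ℕ) (hk : k + 1 < r) :
      φ (x ⟨k + 1, hk⟩) = (p : K) ^ i * x ⟨k, k.lt_of_succ_lt hk⟩ := by
    simpa [hk] using hFx ⟨k, k.lt_of_succ_lt hk⟩
  have hx0 : x ⟨0, hr⟩ ≠ 0 := fun h0 =>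
    hx (funext fun j => (chain_eq_zero_iff φ x hpi hchain hr j j.2).mpr h0)
  have hnz (j : Fin r) : x j ≠ 0 := (chain_eq_zero_iff φ x hpi hchain hr j j.2).not.mpr hx0
  obtain ⟨n, rfl⟩ := Nat.exists_eq_add_one_of_ne_zero hr.ne'
  have hclose : (p : K) ^ s * φ (x ⟨0, hr⟩) = (p : K) ^ i * x ⟨n, n.lt_succ_self⟩ := by
    simpa using hFx ⟨n, n.lt_succ_self⟩
  have hs : s = ((n + 1 : ℕ) : ℤ) * i := by
    have h := congrArg v hclose
    rw [hv_mul _ _ (zpow_ne_zero _ hp0) ((map_ne_zero φ).mpr (hnz _)), hv_phi _ (hnz _),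
      hv_mul _ _ hpi (hnz _), val_chain φ x v hv_mul hv_phi hpi hchain hnz hr n n.lt_succ_self,
      hv_zpow, hv_zpow] at h
    push_cast
    linarith
  have hr1 := eq_one_of_isCoprime_mul (hs ▸ hcop)
  refine ⟨hr1, ?_⟩
  rw [hs, hr1, Nat.cast_one, one_mul]

/-- Let `K = W(k)[1/p]` (abstracted here as a field `K` equipped with a Frobenius automorphism
`φ` preserving the `p`-adic valuation `v`, with `v p = 1`), and `V = K^r` with the semilinear
operator `F(x_1,…,x_r) = (φ(x_2),…,φ(x_r), p^s φ(x_1))`, where `gcd(r,s) = 1`, `r > 0`.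
If some nonzero `x` satisfies `F x = p^i • x`, then `r = 1` and `s = i`. -/
theorem stmt_2 (p : ℕ) [Fact p.Prime] (K : Type*) [Field K]
    (φ : K ≃+* K) (v : K → ℤ)
    (hp0 : (p : K) ≠ 0)
    (hv_mul : ∀ x y : K, x ≠ 0 → y ≠ 0 → v (x * y) = v x + v y)
    (hv_p : v ((p : K)) = 1)
    (hv_phi : ∀ x : K, x ≠ 0 → v (φ x) = v x)
    (r : ℕ) (s i : ℤ) (hr : 0 < r) (hcop : IsCoprime (r : ℤ) s)
    (x : Fin r → K) (hx : x ≠ 0)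
    (hFx : ∀ j : Fin r,
      (if h : (j : ℕ) + 1 < r then φ (x ⟨(j : ℕ) + 1, h⟩)
        else (p : K) ^ s * φ (x ⟨0, hr⟩)) = (p : K) ^ i * x j) :
    r = 1 ∧ s = i :=
  stmt_2_general p K φ v hp0 hv_mul hv_p hv_phi r s i hr hcop x hx hFx
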